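/- Suppose v(x) > 0 for all x ∈ [0,Q). Then the bidpoint-constrained uniform-price auction with M bid points has a unique minimax-loss bid (q,b), and it equalizes overbidding and underbidding regrets at every bid point: for all k ∈ {1,…,M}, q_k·b_k = L and ∫_{q_{k−1}}^Q (v(x) − b_k)_+ dx = L, where L = L^LAB(q,b) is the minimax loss. -/

import Mathlib

open MeasureTheory intervalIntegral

noncomputable section

/-- Positive part `(x)₊ = max(x,0)`. -/
def pos (x : ℝ) : ℝ := max x 0

/-- An `M`-point bid `(q,b)`: `0 = q_0 ≤ q_1 ≤ … ≤ q_M ≤ Q` and `b_1 ≥ … ≥ b_M ≥ 0`. -/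
def IsBidPts (Q : ℝ) (M : ℕ) (q b : ℕ → ℝ) : Prop :=
  q 0 = 0 ∧ (∀ k, k < M → q k ≤ q (k + 1)) ∧ q M ≤ Q ∧
    (∀ k, 1 ≤ k → k < M → b (k + 1) ≤ b k) ∧ 0 ≤ b M

/-- The step bid function induced by the `M`-point bid `(q,b)`:
`b̂(x) = b_k` for `q_{k−1} ≤ x < q_k` and `b̂(x) = 0` for `x ≥ q_M`. -/
def bhat (M : ℕ) (q b : ℕ → ℝ) (x : ℝ) : ℝ :=
  ∑ k ∈ Finset.Icc 1 M, if q (k - 1) ≤ x ∧ x < q k then b k else 0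

/-- Conditional regret at quantity `t` in the bidpoint-constrained pay-as-bid auction:
`R^PAB_t(q,b) = ∫_0^t (b̂(x) − b̂(t)) dx + ∫_t^Q (v(x) − b̂(t))₊ dx`. -/
def Rcpab (Q : ℝ) (M : ℕ) (v : ℝ → ℝ) (q b : ℕ → ℝ) (t : ℝ) : ℝ :=
  (∫ x in (0:ℝ)..t, (bhat M q b x - bhat M q b t))
    + ∫ x in t..Q, pos (v x - bhat M q b t)

/-- Loss in the bidpoint-constrained pay-as-bid auction:
`L^PAB(q,b) = sup_{t ∈ [0,Q]} R^PAB_t(q,b)`. -/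
def Lcpab (Q : ℝ) (M : ℕ) (v : ℝ → ℝ) (q b : ℕ → ℝ) : ℝ :=
  sSup {r : ℝ | ∃ t ∈ Set.Icc (0:ℝ) Q, r = Rcpab Q M v q b t}

/-- A minimax-loss `M`-point bid in the constrained pay-as-bid auction. -/
def IsMinimaxCPAB (Q : ℝ) (M : ℕ) (v : ℝ → ℝ) (q b : ℕ → ℝ) : Prop :=
  IsBidPts Q M q b ∧ ∀ q' b', IsBidPts Q M q' b' → Lcpab Q M v q b ≤ Lcpab Q M v q' b'

/-- Loss in the bidpoint-constrained uniform-price auction: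
`L^LAB(q,b) = max( max_{1≤k≤M} max( q_k·b_k , ∫_{q_{k−1}}^Q (v(x) − b_k)₊ dx ) , ∫_{q_M}^Q v )`. -/
def Lclab (Q : ℝ) (M : ℕ) (hM : 1 ≤ M) (v : ℝ → ℝ) (q b : ℕ → ℝ) : ℝ :=
  max ((Finset.Icc 1 M).sup' (Finset.nonempty_Icc.mpr hM)
        (fun k => max (q k * b k) (∫ x in q (k - 1)..Q, pos (v x - b k))))
      (∫ x in q M..Q, v x)

/-- A minimax-loss `M`-point bid in the constrained uniform-price auction. -/
def IsMinimaxCLAB (Q : ℝ) (M : ℕ) (hM : 1 ≤ M) (v : ℝ → ℝ) (q b : ℕ → ℝ) : Prop :=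
  IsBidPts Q M q b ∧
    ∀ q' b', IsBidPts Q M q' b' → Lclab Q M hM v q b ≤ Lclab Q M hM v q' b'

/-- The marginal value function: weakly decreasing, nonnegative and integrable on `[0,Q]`. -/
def IsValueFn (Q : ℝ) (v : ℝ → ℝ) : Prop :=
  AntitoneOn v (Set.Icc 0 Q) ∧ (∀ x ∈ Set.Icc (0:ℝ) Q, 0 ≤ v x) ∧
    IntervalIntegrable v volume 0 Q

/-!
For a level `L > 0` the bid points are forced greedily from the left: at `q_{k-1}` the smallest bid
with underbidding regret at most `L` is `b_k = minBid Q v q_{k-1} L`, and `q_k = L / b_k` is the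
largest quantity with overbidding regret at most `L`. The last point `q_M(L)` of this chain depends
continuously on `L`, so by the intermediate value theorem `∫_{q_M(L)}^Q v = L` for some `L`. At
that level every regret of the chain bid equals `L`, and a bid with loss at most `L` is squeezed
onto the chain: forward induction gives `q_k ≤ q_k(L)`, and since `v > 0` the regrets are strictly
monotone, which propagates equality back from `q_M`.
-/

open Set Filter Topology

lemma pos_nonneg (x : ℝ) : 0 ≤ pos x := le_max_right _ _

lemma pos_mono {x y : ℝ} (h : x ≤ y) : pos x ≤ pos y := max_le_max_right 0 h

lemma IntervalIntegrable.pos {f : ℝ → ℝ} {a b : ℝ} (hf : IntervalIntegrable f volume a b) :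
    IntervalIntegrable (fun x => pos (f x)) volume a b :=
  ⟨hf.1.pos_part, hf.2.pos_part⟩

lemma continuousOn_integral_left_Icc {f : ℝ → ℝ} {a b : ℝ} (hab : a ≤ b)
    (hf : IntervalIntegrable f volume a b) :
    ContinuousOn (fun s => ∫ x in s..b, f x) (Icc a b) := by
  have := intervalIntegral.continuousOn_primitive_interval_left (μ := volume)
    (by rw [uIcc_of_le hab]; exact (intervalIntegrable_iff_integrableOn_Icc_of_le hab).1 hf)
  rwa [uIcc_of_le hab] at this

def underbidRegret (Q : ℝ) (v : ℝ → ℝ) (s b : ℝ) : ℝ := ∫ x in s..Q, pos (v x - b)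

namespace IsValueFn

variable {Q : ℝ} {v : ℝ → ℝ}

lemma intervalIntegrable (hv : IsValueFn Q v) {s t : ℝ} (hs : 0 ≤ s) (hst : s ≤ t) (ht : t ≤ Q) :
    IntervalIntegrable v volume s t :=
  hv.2.2.mono_set (by
    rw [uIcc_of_le hst, uIcc_of_le (hs.trans (hst.trans ht))]; exact Icc_subset_Icc hs ht)

lemma intervalIntegrable_pos_sub (hv : IsValueFn Q v) {s t : ℝ} (hs : 0 ≤ s) (hst : s ≤ t)
    (ht : t ≤ Q) (b : ℝ) :
    IntervalIntegrable (fun x => pos (v x - b)) volume s t :=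
  ((hv.intervalIntegrable hs hst ht).sub intervalIntegrable_const).pos

end IsValueFn

section underbidRegret

variable {Q : ℝ} {v : ℝ → ℝ} {s s' b b' : ℝ}

lemma underbidRegret_nonneg (hs : s ≤ Q) (b : ℝ) : 0 ≤ underbidRegret Q v s b :=
  intervalIntegral.integral_nonneg hs fun _ _ => pos_nonneg _

lemma underbidRegret_split (hv : IsValueFn Q v) (hs : 0 ≤ s) (hss' : s ≤ s') (hs' : s' ≤ Q)
    (b : ℝ) :
    (∫ x in s..s', pos (v x - b)) + underbidRegret Q v s' b = underbidRegret Q v s b :=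
  integral_add_adjacent_intervals (hv.intervalIntegrable_pos_sub hs hss' hs' b)
    (hv.intervalIntegrable_pos_sub (hs.trans hss') hs' le_rfl b)

lemma underbidRegret_anti_left (hv : IsValueFn Q v) (hs : 0 ≤ s) (hss' : s ≤ s')
    (hs' : s' ≤ Q) (b : ℝ) : underbidRegret Q v s' b ≤ underbidRegret Q v s b := by
  rw [← underbidRegret_split hv hs hss' hs' b, le_add_iff_nonneg_left]
  exact intervalIntegral.integral_nonneg hss' fun _ _ => pos_nonneg _

lemma underbidRegret_anti_right (hv : IsValueFn Q v) (hs : s ∈ Icc 0 Q) :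
    Antitone (underbidRegret Q v s) := fun b b' hbb' =>
  intervalIntegral.integral_mono_on hs.2 (hv.intervalIntegrable_pos_sub hs.1 hs.2 le_rfl b')
    (hv.intervalIntegrable_pos_sub hs.1 hs.2 le_rfl b) fun _ _ => pos_mono (by linarith)

lemma underbidRegret_zero (hv : IsValueFn Q v) (hs : s ∈ Icc 0 Q) :
    underbidRegret Q v s 0 = ∫ x in s..Q, v x :=
  integral_congr fun x hx => by
    rw [uIcc_of_le hs.2] at hx
    simp [pos, hv.2.1 x ⟨hs.1.trans hx.1, hx.2⟩]

lemma underbidRegret_value_zero_eq_zero (hv : IsValueFn Q v) (hs : s ∈ Icc 0 Q) :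
    underbidRegret Q v s (v 0) = 0 := by
  have hzero : EqOn (fun x => pos (v x - v 0)) (fun _ => 0) (uIcc s Q) := fun x hx => by
    rw [uIcc_of_le hs.2] at hx
    exact max_eq_right (sub_nonpos.2 (hv.1 ⟨le_rfl, hs.1.trans hs.2⟩
      ⟨hs.1.trans hx.1, hx.2⟩ (hs.1.trans hx.1)))
  rw [underbidRegret, integral_congr hzero, intervalIntegral.integral_zero]

lemma continuousOn_underbidRegret_left (hv : IsValueFn Q v) (b : ℝ) :
    ContinuousOn (underbidRegret Q v · b) (Icc 0 Q) := by
  rcases le_or_gt 0 Q with hQ | hQ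
  · exact continuousOn_integral_left_Icc hQ (hv.intervalIntegrable_pos_sub le_rfl hQ le_rfl b)
  · simp [Icc_eq_empty_of_lt hQ]

lemma continuous_underbidRegret_right (hv : IsValueFn Q v) (hs : s ∈ Icc 0 Q) :
    Continuous (underbidRegret Q v s) := by
  refine (LipschitzWith.of_dist_le_mul (K := ⟨Q - s, sub_nonneg.2 hs.2⟩) fun b b' => ?_).continuous
  have hint := hv.intervalIntegrable_pos_sub hs.1 hs.2 le_rfl
  rw [Real.dist_eq, Real.dist_eq, underbidRegret, underbidRegret,
    ← intervalIntegral.integral_sub (hint b) (hint b')]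
  change _ ≤ (Q - s) * _
  rw [mul_comm, ← abs_of_nonneg (sub_nonneg.2 hs.2), ← Real.norm_eq_abs]
  refine intervalIntegral.norm_integral_le_of_norm_le_const fun x _ => ?_
  have := abs_max_sub_max_le_abs (v x - b) (v x - b') 0
  rw [sub_sub_sub_cancel_left, abs_sub_comm b'] at this
  exact this

end underbidRegret

section strict

variable {Q : ℝ} {v : ℝ → ℝ} {s s' t x b b' : ℝ}

lemma exists_lt_value_of_underbidRegret_pos (hs : s ≤ Q) (h : 0 < underbidRegret Q v s b) :
    ∃ x ∈ Ioc s Q, b < v x := by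
  by_contra! hle
  have hzero : underbidRegret Q v s b = 0 := by
    rw [underbidRegret, intervalIntegral.integral_of_le hs,
      setIntegral_congr_fun (f := fun x => pos (v x - b)) (g := fun _ => 0) measurableSet_Ioc
        fun x hx => max_eq_right (sub_nonpos.2 (hle x hx)), integral_zero]
  exact h.ne' hzero

lemma integral_pos_sub_pos (hv : IsValueFn Q v) (hs : 0 ≤ s) (hx : x ∈ Ioc s t) (ht : t ≤ Q)
    (hb : b < v x) : 0 < ∫ y in s..t, pos (v y - b) := calc
  0 < (x - s) * (v x - b) := mul_pos (sub_pos.2 hx.1) (sub_pos.2 hb)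
  _ = ∫ _ in s..x, (v x - b) := by simp [mul_sub]
  _ ≤ ∫ y in s..x, pos (v y - b) :=
    intervalIntegral.integral_mono_on hx.1.le intervalIntegrable_const
      (hv.intervalIntegrable_pos_sub hs hx.1.le (hx.2.trans ht) b) fun y hy =>
      (sub_le_sub_right (hv.1 ⟨hs.trans hy.1, hy.2.trans (hx.2.trans ht)⟩
        ⟨hs.trans hx.1.le, hx.2.trans ht⟩ hy.2) b).trans (le_max_left _ _)
  _ ≤ ∫ y in s..t, pos (v y - b) :=
    intervalIntegral.integral_mono_interval le_rfl hx.1.le hx.2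
      (Eventually.of_forall fun _ => pos_nonneg _)
      (hv.intervalIntegrable_pos_sub hs (hx.1.le.trans hx.2) ht b)

lemma underbidRegret_lt_of_lt_left (hv : IsValueFn Q v) (hs : 0 ≤ s) (hss' : s < s')
    (hs' : s' ≤ Q) (h : 0 < underbidRegret Q v s' b) :
    underbidRegret Q v s' b < underbidRegret Q v s b := by
  obtain ⟨x, hx, hbx⟩ := exists_lt_value_of_underbidRegret_pos hs' h
  have hgap := integral_pos_sub_pos hv hs ⟨hss', le_rfl⟩ hs'
    (hbx.trans_le (hv.1 ⟨hs.trans hss'.le, hs'⟩ ⟨hs.trans (hss'.trans hx.1).le, hx.2⟩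
      hx.1.le))
  linarith [underbidRegret_split hv hs hss'.le hs' b]

lemma underbidRegret_lt_of_lt_right (hv : IsValueFn Q v) (hs : s ∈ Icc 0 Q) (hbb' : b < b')
    (h : 0 < underbidRegret Q v s b') : underbidRegret Q v s b' < underbidRegret Q v s b := by
  obtain ⟨x, hx, hbx⟩ := exists_lt_value_of_underbidRegret_pos hs.2 h
  have hint := hv.intervalIntegrable_pos_sub hs.1 hs.2 le_rfl
  have hgap : (x - s) * (b' - b) ≤ ∫ y in s..Q, (pos (v y - b) - pos (v y - b')) := calc
    (x - s) * (b' - b) = ∫ _ in s..x, (b' - b) := by simp [mul_sub]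
    _ ≤ ∫ y in s..x, (pos (v y - b) - pos (v y - b')) := by
      refine intervalIntegral.integral_mono_on hx.1.le intervalIntegrable_const
        ((hv.intervalIntegrable_pos_sub hs.1 hx.1.le hx.2 b).sub
          (hv.intervalIntegrable_pos_sub hs.1 hx.1.le hx.2 b')) fun y hy => ?_
      have hvy := hv.1 ⟨hs.1.trans hy.1, hy.2.trans hx.2⟩
        ⟨hs.1.trans hx.1.le, hx.2⟩ hy.2
      rw [pos, pos, max_eq_left (by linarith), max_eq_left (by linarith)]
      linarith
    _ ≤ ∫ y in s..Q, (pos (v y - b) - pos (v y - b')) :=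
      intervalIntegral.integral_mono_interval le_rfl hx.1.le hx.2
        (Eventually.of_forall fun _ => sub_nonneg.2 (pos_mono (by linarith)))
        ((hint b).sub (hint b'))
  rw [intervalIntegral.integral_sub (hint b) (hint b')] at hgap
  have : 0 < (x - s) * (b' - b) := mul_pos (sub_pos.2 hx.1) (sub_pos.2 hbb')
  unfold underbidRegret
  linarith

lemma integral_value_lt_of_lt (hv : IsValueFn Q v) (hvpos : ∀ x ∈ Ico 0 Q, 0 < v x)
    (hs : 0 ≤ s) (hss' : s < s') (hs' : s' ≤ Q) : ∫ x in s'..Q, v x < ∫ x in s..Q, v x := by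
  have hgap := integral_pos_sub_pos hv hs (x := (s + s') / 2) ⟨by linarith, by linarith⟩ hs'
    (hvpos _ ⟨by linarith, by linarith⟩)
  have hsplit := underbidRegret_split hv hs hss'.le hs' 0
  rw [underbidRegret_zero hv ⟨hs, hss'.le.trans hs'⟩,
    underbidRegret_zero hv ⟨hs.trans hss'.le, hs'⟩] at hsplit
  linarith

end strict

def minBid (Q : ℝ) (v : ℝ → ℝ) (s L : ℝ) : ℝ :=
  sInf {b | 0 ≤ b ∧ underbidRegret Q v s b ≤ L}

section minBid

variable {Q : ℝ} {v : ℝ → ℝ} {s s' L c : ℝ}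

lemma minBid_nonneg : 0 ≤ minBid Q v s L := Real.sInf_nonneg fun _ hb => hb.1

lemma minBid_le (hc : 0 ≤ c) (h : underbidRegret Q v s c ≤ L) : minBid Q v s L ≤ c :=
  csInf_le ⟨0, fun _ hb => hb.1⟩ ⟨hc, h⟩

lemma nonempty_minBid_set (hv : IsValueFn Q v) (hs : s ∈ Icc 0 Q) (hL : 0 ≤ L) :
    {b | 0 ≤ b ∧ underbidRegret Q v s b ≤ L}.Nonempty :=
  ⟨v 0, hv.2.1 0 ⟨le_rfl, hs.1.trans hs.2⟩, (underbidRegret_value_zero_eq_zero hv hs).trans_le hL⟩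

lemma le_minBid (hv : IsValueFn Q v) (hs : s ∈ Icc 0 Q) (hL : 0 ≤ L)
    (h : L < underbidRegret Q v s c) : c ≤ minBid Q v s L :=
  le_csInf (nonempty_minBid_set hv hs hL) fun b hb => by
    by_contra! hbc
    exact (h.trans_le (underbidRegret_anti_right hv hs hbc.le)).not_ge hb.2

lemma minBid_anti_left (hv : IsValueFn Q v) (hs : 0 ≤ s) (hss' : s ≤ s') (hs' : s' ≤ Q)
    (hL : 0 ≤ L) : minBid Q v s' L ≤ minBid Q v s L :=
  csInf_le_csInf ⟨0, fun _ hb => hb.1⟩ (nonempty_minBid_set hv ⟨hs, hss'.trans hs'⟩ hL)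
    fun b hb => ⟨hb.1, (underbidRegret_anti_left hv hs hss' hs' b).trans hb.2⟩

lemma underbidRegret_minBid_le (hv : IsValueFn Q v) (hs : s ∈ Icc 0 Q) (hL : 0 ≤ L) :
    underbidRegret Q v s (minBid Q v s L) ≤ L :=
  (IsClosed.csInf_mem ((isClosed_le continuous_const continuous_id).inter
    (isClosed_le (continuous_underbidRegret_right hv hs) continuous_const))
    (nonempty_minBid_set hv hs hL) ⟨0, fun _ hb => hb.1⟩).2

lemma underbidRegret_minBid (hv : IsValueFn Q v) (hs : s ∈ Icc 0 Q) (hL : 0 ≤ L)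
    (hpos : 0 < minBid Q v s L) : underbidRegret Q v s (minBid Q v s L) = L := by
  refine (underbidRegret_minBid_le hv hs hL).antisymm (not_lt.1 fun hlt => ?_)
  have hnear : ∀ᶠ b in 𝓝 (minBid Q v s L), 0 < b ∧ underbidRegret Q v s b < L :=
    (eventually_gt_nhds hpos).and
      (((continuous_underbidRegret_right hv hs).tendsto _).eventually_lt_const hlt)
  obtain ⟨b, ⟨hb0, hbL⟩, hbβ⟩ := ((hnear.filter_mono nhdsWithin_le_nhds).and
    (self_mem_nhdsWithin (s := Iio (minBid Q v s L)))).exists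
  exact (minBid_le hb0.le hbL.le).not_gt hbβ

lemma continuousOn_minBid (hv : IsValueFn Q v) :
    ContinuousOn (fun p : ℝ × ℝ => minBid Q v p.1 p.2) (Icc 0 Q ×ˢ Ioi 0) := by
  rintro ⟨s, L⟩ ⟨hs, hL⟩
  -- `L < underbidRegret Q v s c` forces `c ≤ minBid`, `underbidRegret Q v s c < L` forces
  -- `minBid ≤ c`, and both strict inequalities persist near `(s, L)`
  have hsign : ∀ c, Tendsto (fun p : ℝ × ℝ => underbidRegret Q v p.1 c - p.2)
      (𝓝[Icc 0 Q ×ˢ Ioi 0] (s, L)) (𝓝 (underbidRegret Q v s c - L)) := fun c =>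
    (((continuousOn_underbidRegret_left hv c).comp continuousOn_fst
      (fun _ hp => hp.1 : MapsTo Prod.fst (Icc 0 Q ×ˢ Ioi (0 : ℝ)) (Icc 0 Q)))
      (s, L) ⟨hs, hL⟩).sub continuousWithinAt_snd
  have hdom : ∀ᶠ p in 𝓝[Icc 0 Q ×ˢ Ioi 0] (s, L), p ∈ Icc 0 Q ×ˢ Ioi 0 := self_mem_nhdsWithin
  refine tendsto_order.2 ⟨fun c hc => ?_, fun c hc => ?_⟩
  · rcases lt_or_ge c 0 with hc0 | hc0
    · exact Eventually.of_forall fun _ => hc0.trans_le minBid_nonneg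
    obtain ⟨c', hcc', hc'⟩ := exists_between hc
    have hgt : L < underbidRegret Q v s c' :=
      not_le.1 fun hle => (minBid_le (hc0.trans hcc'.le) hle).not_gt hc'
    filter_upwards [hdom, (hsign c').eventually (lt_mem_nhds (sub_pos.2 hgt))] with p hp hpc
    exact hcc'.trans_le (le_minBid hv hp.1 (le_of_lt hp.2) (sub_pos.1 hpc))
  · obtain ⟨c', hc', hcc'⟩ := exists_between hc
    have hlt : underbidRegret Q v s c' < L := by
      rcases (underbidRegret_nonneg hs.2 c').eq_or_lt with h0 | h0
      · rwa [← h0]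
      · exact (underbidRegret_lt_of_lt_right hv hs hc' h0).trans_le
          (underbidRegret_minBid_le hv hs hL.le)
    filter_upwards [(hsign c').eventually (gt_mem_nhds (sub_neg.2 hlt))] with p hpc
    exact (minBid_le (minBid_nonneg.trans hc'.le) (sub_neg.1 hpc).le).trans_lt hcc'

end minBid

/-- `L / max β (L / Q) = min (L / β) Q` for `β = minBid Q v s L`: the largest quantity at which
that bid has overbidding regret at most `L`, capped at `Q` (no junk value when `β = 0`). -/
def nextQty (Q : ℝ) (v : ℝ → ℝ) (s L : ℝ) : ℝ := L / max (minBid Q v s L) (L / Q)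

def qtyChain (Q : ℝ) (v : ℝ → ℝ) (L : ℝ) : ℕ → ℝ
  | 0 => 0
  | k + 1 => nextQty Q v (qtyChain Q v L k) L

def bidChain (Q : ℝ) (v : ℝ → ℝ) (L : ℝ) (k : ℕ) : ℝ := minBid Q v (qtyChain Q v L (k - 1)) L

section chain

variable {Q : ℝ} {v : ℝ → ℝ} {s s' L : ℝ}

lemma nextQty_mem (hQ : 0 < Q) (hL : 0 < L) : nextQty Q v s L ∈ Icc 0 Q :=
  ⟨div_nonneg hL.le (le_max_of_le_right (div_pos hL hQ).le),
    (div_le_div_of_nonneg_left hL.le (div_pos hL hQ) (le_max_right _ _)).trans_eq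
      (div_div_cancel₀ hL.ne')⟩

lemma nextQty_mono (hv : IsValueFn Q v) (hQ : 0 < Q) (hL : 0 < L) (hs : 0 ≤ s) (hss' : s ≤ s')
    (hs' : s' ≤ Q) : nextQty Q v s L ≤ nextQty Q v s' L :=
  div_le_div_of_nonneg_left hL.le (lt_max_of_lt_right (div_pos hL hQ))
    (max_le_max_right _ (minBid_anti_left hv hs hss' hs' hL.le))

lemma nextQty_mul_minBid (hQ : 0 < Q) (hL : 0 < L) (h : nextQty Q v s L < Q) :
    0 < minBid Q v s L ∧ nextQty Q v s L * minBid Q v s L = L := by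
  have hmax : max (minBid Q v s L) (L / Q) = minBid Q v s L :=
    max_eq_left (not_lt.1 fun hlt => h.ne (by rw [nextQty, max_eq_right hlt.le,
      div_div_cancel₀ hL.ne']))
  have hpos : 0 < minBid Q v s L := hmax ▸ lt_max_of_lt_right (div_pos hL hQ)
  exact ⟨hpos, by rw [nextQty, hmax, div_mul_cancel₀ _ hpos.ne']⟩

lemma continuousOn_nextQty (hv : IsValueFn Q v) (hQ : 0 < Q) :
    ContinuousOn (fun p : ℝ × ℝ => nextQty Q v p.1 p.2) (Icc 0 Q ×ˢ Ioi 0) :=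
  continuousOn_snd.div (ContinuousOn.sup (continuousOn_minBid hv) (continuousOn_snd.div_const Q))
    fun _ hp => (lt_max_of_lt_right (div_pos hp.2 hQ)).ne'

lemma qtyChain_mem (hQ : 0 < Q) (hL : 0 < L) : ∀ k, qtyChain Q v L k ∈ Icc 0 Q
  | 0 => ⟨le_rfl, hQ.le⟩
  | _ + 1 => nextQty_mem hQ hL

lemma monotone_qtyChain (hv : IsValueFn Q v) (hQ : 0 < Q) (hL : 0 < L) :
    Monotone (qtyChain Q v L) := by
  refine monotone_nat_of_le_succ fun k => ?_
  induction k with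
  | zero => exact (nextQty_mem hQ hL).1
  | succ k ih =>
    exact nextQty_mono hv hQ hL (qtyChain_mem hQ hL k).1 ih (qtyChain_mem hQ hL (k + 1)).2

lemma continuousOn_qtyChain (hv : IsValueFn Q v) (hQ : 0 < Q) :
    ∀ k, ContinuousOn (fun L => qtyChain Q v L k) (Ioi 0)
  | 0 => continuousOn_const
  | k + 1 => (continuousOn_nextQty hv hQ).comp
      ((continuousOn_qtyChain hv hQ k).prodMk continuousOn_id)
      fun _ hL => ⟨qtyChain_mem hQ hL k, hL⟩

lemma isBidPts_chain (hv : IsValueFn Q v) (hQ : 0 < Q) (hL : 0 < L) (M : ℕ) :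
    IsBidPts Q M (qtyChain Q v L) (bidChain Q v L) :=
  ⟨rfl, fun k _ => monotone_qtyChain hv hQ hL k.le_succ, (qtyChain_mem hQ hL M).2,
    fun k _ _ => minBid_anti_left hv (qtyChain_mem hQ hL _).1
      (monotone_qtyChain hv hQ hL (by omega)) (qtyChain_mem hQ hL _).2 hL.le,
    minBid_nonneg⟩

end chain

section level

variable {Q : ℝ} {v : ℝ → ℝ}

lemma integral_value_anti (hv : IsValueFn Q v) {s s' : ℝ} (hs : 0 ≤ s) (hss' : s ≤ s')
    (hs' : s' ≤ Q) : ∫ x in s'..Q, v x ≤ ∫ x in s..Q, v x := by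
  simpa only [underbidRegret_zero hv ⟨hs, hss'.trans hs'⟩,
    underbidRegret_zero hv ⟨hs.trans hss', hs'⟩]
    using underbidRegret_anti_left hv hs hss' hs' 0

lemma exists_level_qtyChain_le (hv : IsValueFn Q v) {s₀ : ℝ} (hs₀ : 0 < s₀) (hs₀Q : s₀ ≤ Q)
    (hW : 0 < ∫ x in s₀..Q, v x) :
    ∃ L, 0 < L ∧ L < ∫ x in s₀..Q, v x ∧ ∀ k, qtyChain Q v L k ≤ s₀ := by
  have hQ : 0 < Q := hs₀.trans_le hs₀Q
  have hs₀mem : s₀ ∈ Icc 0 Q := ⟨hs₀.le, hs₀Q⟩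
  -- a bid `b₀ > 0` leaving positive regret at `s₀` keeps every step below `s₀` once `L ≤ b₀ s₀`
  obtain ⟨b₀, hgb₀, hb₀⟩ : ∃ b₀, 0 < underbidRegret Q v s₀ b₀ ∧ 0 < b₀ :=
    ((((continuous_underbidRegret_right hv hs₀mem).tendsto 0).eventually_const_lt
      (by rwa [underbidRegret_zero hv hs₀mem])).filter_mono nhdsWithin_le_nhds |>.and
      (self_mem_nhdsWithin (s := Ioi 0))).exists
  set L := min (underbidRegret Q v s₀ b₀) (b₀ * s₀) / 2 with hLdef
  have hL : 0 < L := by positivity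
  have hLg : L < underbidRegret Q v s₀ b₀ := by
    linarith [min_le_left (underbidRegret Q v s₀ b₀) (b₀ * s₀)]
  have hLb : L ≤ b₀ * s₀ := by
    linarith [min_le_right (underbidRegret Q v s₀ b₀) (b₀ * s₀)]
  refine ⟨L, hL, hLg.trans_le ((underbidRegret_anti_right hv hs₀mem hb₀.le).trans_eq
    (underbidRegret_zero hv hs₀mem)), fun k => ?_⟩
  induction k with
  | zero => exact hs₀.le
  | succ k ih =>
    have hs := qtyChain_mem hQ hL (v := v) k
    have hb : b₀ ≤ minBid Q v (qtyChain Q v L k) L :=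
      le_minBid hv hs hL.le (hLg.trans_le (underbidRegret_anti_left hv hs.1 ih hs₀Q b₀))
    calc qtyChain Q v L (k + 1) ≤ L / b₀ :=
          div_le_div_of_nonneg_left hL.le hb₀ (hb.trans (le_max_left _ _))
      _ ≤ s₀ := (div_le_iff₀ hb₀).2 (by linarith)

lemma exists_integral_qtyChain_eq (hQ : 0 < Q) (hv : IsValueFn Q v)
    (hvpos : ∀ x ∈ Ico 0 Q, 0 < v x) (M : ℕ) :
    ∃ L, 0 < L ∧ ∫ x in qtyChain Q v L M..Q, v x = L := by
  obtain ⟨L₁, hL₁, hL₁W, hchain⟩ := exists_level_qtyChain_le hv (half_pos hQ)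
    (half_le_self hQ.le)
    (by simpa using integral_value_lt_of_lt hv hvpos (half_pos hQ).le (half_lt_self hQ) le_rfl)
  have hL₁W₀ : L₁ ≤ ∫ x in (0 : ℝ)..Q, v x :=
    hL₁W.le.trans (integral_value_anti hv le_rfl (half_pos hQ).le (half_lt_self hQ).le)
  set F := fun L => (∫ x in qtyChain Q v L M..Q, v x) - L
  have hF : ContinuousOn F (Icc L₁ (∫ x in (0 : ℝ)..Q, v x)) :=
    (((continuousOn_integral_left_Icc hQ.le hv.2.2).comp (continuousOn_qtyChain hv hQ M)
      fun _ hL => qtyChain_mem hQ hL M).mono fun _ hL => hL₁.trans_le hL.1).sub continuousOn_id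
  have hF₁ : 0 ≤ F L₁ := by
    have := integral_value_anti hv (qtyChain_mem hQ hL₁ M).1 (hchain M) (half_lt_self hQ).le
    simp only [F]; linarith
  have hF₂ : F (∫ x in (0 : ℝ)..Q, v x) ≤ 0 :=
    have hmem := qtyChain_mem hQ (hL₁.trans_le hL₁W₀) (v := v) M
    sub_nonpos.2 (integral_value_anti hv le_rfl hmem.1 hmem.2)
  obtain ⟨L, hL, hFL⟩ := intermediate_value_Icc' hL₁W₀ hF ⟨hF₂, hF₁⟩
  exact ⟨L, hL₁.trans_le hL.1, sub_eq_zero.1 hFL⟩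

end level

namespace IsBidPts

variable {Q : ℝ} {M k : ℕ} {q b : ℕ → ℝ}

lemma monotoneOn (h : IsBidPts Q M q b) : MonotoneOn q (Iic M) :=
  monotoneOn_of_le_add_one ordConnected_Iic fun a _ _ ha => h.2.1 a ha

lemma mem_Icc (h : IsBidPts Q M q b) (hk : k ≤ M) : q k ∈ Icc 0 Q :=
  ⟨h.1 ▸ h.monotoneOn (Nat.zero_le M) hk (Nat.zero_le k),
    (h.monotoneOn hk (mem_Iic.2 le_rfl) hk).trans h.2.2.1⟩

lemma bid_nonneg (h : IsBidPts Q M q b) (hk₁ : 1 ≤ k) (hk : k ≤ M) : 0 ≤ b k :=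
  h.2.2.2.2.trans <| antitoneOn_of_add_one_le ordConnected_Icc
    (fun a _ ha ha' => h.2.2.2.1 a ha.1 (Nat.lt_of_succ_le ha'.2)) ⟨hk₁, hk⟩
    ⟨hk₁.trans hk, le_rfl⟩ hk

end IsBidPts

lemma forall_mem_Icc_one_iff {M : ℕ} {P : ℕ → Prop} :
    (∀ k ∈ Finset.Icc 1 M, P k) ↔ ∀ k < M, P (k + 1) := by
  refine ⟨fun h k hk => h (k + 1) (Finset.mem_Icc.2 ⟨by omega, hk⟩), fun h k hk => ?_⟩
  obtain ⟨hk₁, hkM⟩ := Finset.mem_Icc.1 hk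
  obtain ⟨j, rfl⟩ : ∃ j, k = j + 1 := ⟨k - 1, by omega⟩
  exact h j (by omega)

section Lclab

variable {Q L : ℝ} {M : ℕ} (hM : 1 ≤ M) {v : ℝ → ℝ} {q b : ℕ → ℝ}

lemma Lclab_le_iff : Lclab Q M hM v q b ≤ L ↔
    (∀ k < M, q (k + 1) * b (k + 1) ≤ L ∧ underbidRegret Q v (q k) (b (k + 1)) ≤ L) ∧
      ∫ x in q M..Q, v x ≤ L := by
  simp only [Lclab, max_le_iff, Finset.sup'_le_iff, forall_mem_Icc_one_iff, Nat.add_sub_cancel]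
  rfl

lemma mul_le_Lclab {k : ℕ} (hk : k < M) : q (k + 1) * b (k + 1) ≤ Lclab Q M hM v q b :=
  (((Lclab_le_iff hM).1 le_rfl).1 k hk).1

end Lclab

section equalizing

variable {Q L : ℝ} {v : ℝ → ℝ} {M k : ℕ} {q b : ℕ → ℝ}

lemma qtyChain_lt (hv : IsValueFn Q v) (hQ : 0 < Q) (hL : 0 < L)
    (hfix : ∫ x in qtyChain Q v L M..Q, v x = L) (hk : k ≤ M) : qtyChain Q v L k < Q := by
  refine (monotone_qtyChain hv hQ hL hk).trans_lt ((qtyChain_mem hQ hL M).2.lt_of_ne fun h => ?_)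
  rw [h, intervalIntegral.integral_same] at hfix
  exact hL.ne hfix

lemma minBid_qtyChain_pos (hv : IsValueFn Q v) (hQ : 0 < Q) (hL : 0 < L)
    (hfix : ∫ x in qtyChain Q v L M..Q, v x = L) (hk : k < M) :
    0 < minBid Q v (qtyChain Q v L k) L ∧
      qtyChain Q v L (k + 1) * minBid Q v (qtyChain Q v L k) L = L :=
  nextQty_mul_minBid hQ hL (qtyChain_lt hv hQ hL hfix hk)

lemma regrets_chain_eq (hv : IsValueFn Q v) (hQ : 0 < Q) (hL : 0 < L)
    (hfix : ∫ x in qtyChain Q v L M..Q, v x = L) (hk : k < M) :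
    qtyChain Q v L (k + 1) * bidChain Q v L (k + 1) = L ∧
      underbidRegret Q v (qtyChain Q v L k) (bidChain Q v L (k + 1)) = L :=
  have hβ := minBid_qtyChain_pos hv hQ hL hfix hk
  ⟨hβ.2, underbidRegret_minBid hv (qtyChain_mem hQ hL k) hL.le hβ.1⟩

lemma Lclab_chain (hM : 1 ≤ M) (hv : IsValueFn Q v) (hQ : 0 < Q) (hL : 0 < L)
    (hfix : ∫ x in qtyChain Q v L M..Q, v x = L) :
    Lclab Q M hM v (qtyChain Q v L) (bidChain Q v L) = L :=
  le_antisymm ((Lclab_le_iff hM).2 ⟨fun _ hk => (regrets_chain_eq hv hQ hL hfix hk).imp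
      le_of_eq le_of_eq, hfix.le⟩)
    ((regrets_chain_eq hv hQ hL hfix hM).1.symm.trans_le (mul_le_Lclab hM hM))

lemma minBid_qtyChain_le_bid (hv : IsValueFn Q v) (hQ : 0 < Q) (hL : 0 < L)
    (hqb : IsBidPts Q M q b) (hunder : underbidRegret Q v (q k) (b (k + 1)) ≤ L) (hk : k < M)
    (hqk : q k ≤ qtyChain Q v L k) : minBid Q v (qtyChain Q v L k) L ≤ b (k + 1) :=
  minBid_le (hqb.bid_nonneg (by omega) hk) ((underbidRegret_anti_left hv (hqb.mem_Icc hk.le).1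
    hqk (qtyChain_mem hQ hL k).2 _).trans hunder)

lemma le_qtyChain_of_regret_le (hv : IsValueFn Q v) (hQ : 0 < Q) (hL : 0 < L)
    (hfix : ∫ x in qtyChain Q v L M..Q, v x = L) (hqb : IsBidPts Q M q b)
    (hreg : ∀ k < M, q (k + 1) * b (k + 1) ≤ L ∧ underbidRegret Q v (q k) (b (k + 1)) ≤ L) :
    ∀ k ≤ M, q k ≤ qtyChain Q v L k
  | 0, _ => hqb.1.le
  | k + 1, hk => by
    obtain ⟨hβ, hmul⟩ := minBid_qtyChain_pos hv hQ hL hfix hk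
    have hb := minBid_qtyChain_le_bid hv hQ hL hqb (hreg k hk).2 hk
      (le_qtyChain_of_regret_le hv hQ hL hfix hqb hreg k (by omega))
    calc q (k + 1) ≤ L / b (k + 1) := (le_div_iff₀ (hβ.trans_le hb)).2 (hreg k hk).1
      _ ≤ L / minBid Q v (qtyChain Q v L k) L := div_le_div_of_nonneg_left hL.le hβ hb
      _ = qtyChain Q v L (k + 1) := (eq_div_of_mul_eq hβ.ne' hmul).symm

lemma bid_eq_minBid_of_regret_le (hv : IsValueFn Q v) (hQ : 0 < Q) (hL : 0 < L)
    (hfix : ∫ x in qtyChain Q v L M..Q, v x = L) (hqb : IsBidPts Q M q b)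
    (hreg : ∀ k < M, q (k + 1) * b (k + 1) ≤ L ∧ underbidRegret Q v (q k) (b (k + 1)) ≤ L)
    (hk : k < M) (hq : q (k + 1) = qtyChain Q v L (k + 1)) :
    b (k + 1) = minBid Q v (qtyChain Q v L k) L := by
  obtain ⟨hβ, hmul⟩ := minBid_qtyChain_pos hv hQ hL hfix hk
  have hφ : 0 < qtyChain Q v L (k + 1) := pos_of_mul_pos_left (hmul.symm ▸ hL) hβ.le
  refine le_antisymm (le_of_mul_le_mul_left ?_ hφ) (minBid_qtyChain_le_bid hv hQ hL hqb
    (hreg k hk).2 hk (le_qtyChain_of_regret_le hv hQ hL hfix hqb hreg k hk.le))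
  rw [hmul, ← hq]
  exact (hreg k hk).1

lemma eq_qtyChain_of_regret_le (hv : IsValueFn Q v) (hvpos : ∀ x ∈ Ico 0 Q, 0 < v x)
    (hQ : 0 < Q) (hL : 0 < L) (hfix : ∫ x in qtyChain Q v L M..Q, v x = L)
    (hqb : IsBidPts Q M q b)
    (hreg : ∀ k < M, q (k + 1) * b (k + 1) ≤ L ∧ underbidRegret Q v (q k) (b (k + 1)) ≤ L)
    (htail : ∫ x in q M..Q, v x ≤ L) : ∀ k ≤ M, q k = qtyChain Q v L k := by
  have hle := le_qtyChain_of_regret_le hv hQ hL hfix hqb hreg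
  intro k hk
  induction hk using Nat.decreasingInduction with
  | self =>
    refine (hle M le_rfl).antisymm (not_lt.1 fun hlt => ?_)
    linarith [integral_value_lt_of_lt hv hvpos (hqb.mem_Icc le_rfl).1 hlt
      (qtyChain_mem hQ hL M).2]
  | of_succ k hk ih =>
    have hbk := bid_eq_minBid_of_regret_le hv hQ hL hfix hqb hreg hk ih
    have hβL := underbidRegret_minBid hv (qtyChain_mem hQ hL k) hL.le
      (minBid_qtyChain_pos hv hQ hL hfix hk).1
    refine (hle k hk.le).antisymm (not_lt.1 fun hlt => ?_)
    have hgap := underbidRegret_lt_of_lt_left hv (hqb.mem_Icc hk.le).1 hlt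
      (qtyChain_mem hQ hL k).2 (hβL ▸ hL)
    linarith [hbk ▸ (hreg k hk).2]

end equalizing

lemma eq_chain_of_Lclab_le {Q L : ℝ} {v : ℝ → ℝ} {M : ℕ} {q b : ℕ → ℝ} (hM : 1 ≤ M)
    (hv : IsValueFn Q v) (hvpos : ∀ x ∈ Ico 0 Q, 0 < v x) (hQ : 0 < Q) (hL : 0 < L)
    (hfix : ∫ x in qtyChain Q v L M..Q, v x = L) (hqb : IsBidPts Q M q b)
    (hloss : Lclab Q M hM v q b ≤ L) :
    ∀ k ∈ Finset.Icc 1 M, q k = qtyChain Q v L k ∧ b k = bidChain Q v L k := by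
  obtain ⟨hreg, htail⟩ := (Lclab_le_iff hM).1 hloss
  have hq := eq_qtyChain_of_regret_le hv hvpos hQ hL hfix hqb hreg htail
  exact forall_mem_Icc_one_iff.2 fun k hk =>
    ⟨hq (k + 1) hk, bid_eq_minBid_of_regret_le hv hQ hL hfix hqb hreg hk (hq (k + 1) hk)⟩

/-- if `v > 0` on `[0,Q)`, the bidpoint-constrained uniform-price auction
with `M` bid points has a unique minimax-loss bid, and it equalizes overbidding and
underbidding regrets at every bid point: `q_k·b_k = L` and `∫_{q_{k−1}}^Q (v − b_k)₊ = L`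
for all `k`, where `L` is the minimax loss. -/
theorem constrained_upa_unique_minimax
    (Q : ℝ) (hQ : 0 < Q) (M : ℕ) (hM : 1 ≤ M)
    (v : ℝ → ℝ) (hv : IsValueFn Q v) (hvpos : ∀ x ∈ Set.Ico (0:ℝ) Q, 0 < v x) :
    ∃ q b : ℕ → ℝ, IsMinimaxCLAB Q M hM v q b ∧
      (∀ q' b', IsMinimaxCLAB Q M hM v q' b' →
        ∀ k ∈ Finset.Icc 1 M, q' k = q k ∧ b' k = b k) ∧
      (∀ k ∈ Finset.Icc 1 M,
        q k * b k = Lclab Q M hM v q b ∧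
        (∫ x in q (k - 1)..Q, pos (v x - b k)) = Lclab Q M hM v q b) := by
  obtain ⟨L, hL, hfix⟩ := exists_integral_qtyChain_eq hQ hv hvpos M
  have hbid := isBidPts_chain hv hQ hL M
  have hequal := fun k (hk : k < M) => regrets_chain_eq hv hQ hL hfix hk
  have hloss := Lclab_chain hM hv hQ hL hfix
  have hforce := fun q' b' => eq_chain_of_Lclab_le (q := q') (b := b') hM hv hvpos hQ hL hfix
  refine ⟨_, _, ⟨hbid, fun q' b' hqb' => ?_⟩,
    fun q' b' hmin => hforce q' b' hmin.1 (hloss ▸ hmin.2 _ _ hbid),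
    hloss.symm ▸ forall_mem_Icc_one_iff.2 hequal⟩
  by_contra! hlt
  obtain ⟨hq₁, hb₁⟩ := hforce q' b' hqb' (hlt.le.trans hloss.le) 1 (Finset.mem_Icc.2 ⟨le_rfl, hM⟩)
  have := mul_le_Lclab (q := q') (b := b') (v := v) (Q := Q) hM hM
  rw [zero_add, hq₁, hb₁, (hequal 0 hM).1] at this
  linarith

end
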